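/- For every positive integer n, the function x ↦ ψ^(2n-1)(e^x) is convex on ℝ, where ψ^(k) denotes the k-th polygamma function. -/

import Mathlib

noncomputable def digamma : ℝ → ℝ := deriv (fun x => Real.log (Real.Gamma x))

noncomputable def polygamma (i : ℕ) : ℝ → ℝ := iteratedDeriv i digamma

/-!
For `x > 0`, differentiating the series `ψ(x) = -γ - 1/x + ∑ₘ (1/(m+1) - 1/(x+m+1))`, which comes
from the Bohr–Mollerup sequence for `log Γ`, gives `ψ^(2n-1)(x) = (2n-1)! ζ(2n, x)`, where
`ζ(s, x) = ∑ₖ (x+k)^(-s)`. Since `d/dx ζ(m, eˣ) = -m eˣ ζ(m+1, eˣ)`, convexity of `x ↦ ζ(m, eˣ)`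
means that `t ↦ t ζ(m+1, t)` is nonincreasing, i.e. `ζ(m+1, t) ≤ (m+1) t ζ(m+2, t)`. This follows
from the integral-type bounds `p ζ(p+1, t+1) ≤ t^(-p) ≤ p ζ(p+1, t)`, obtained by telescoping the
tangent-line bounds of the convex function `x ↦ x^(-p)`, together with the tangent-line bound
`(t+1)^(m+1) - t^(m+1) ≤ (m+1)(t+1)^m`.
-/

open Real Filter Set Topology

-- The Hurwitz zeta function `ζ(s, x)` at a natural exponent `s`.
noncomputable def hurwitzSum (s : ℕ) (x : ℝ) : ℝ := ∑' k : ℕ, ((x + k) ^ s)⁻¹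

section HurwitzSum

variable {s : ℕ} {x : ℝ}

lemma summable_inv_add_pow (hs : 2 ≤ s) (hx : 0 ≤ x) :
    Summable fun k : ℕ => ((x + k) ^ s)⁻¹ := by
  refine ((summable_one_div_nat_add_rpow x s).2 (by exact_mod_cast hs)).congr fun k => ?_
  rw [abs_of_nonneg (by positivity), rpow_natCast, one_div, add_comm]

lemma hurwitzSum_eq_inv_pow_add (hs : 2 ≤ s) (hx : 0 ≤ x) :
    hurwitzSum s x = (x ^ s)⁻¹ + hurwitzSum s (x + 1) := by
  rw [hurwitzSum, (summable_inv_add_pow hs hx).tsum_eq_zero_add, hurwitzSum]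
  push_cast
  simp only [add_zero, add_assoc, add_comm (1 : ℝ)]

lemma hasDerivAt_inv_pow (s : ℕ) (hx : x ≠ 0) :
    HasDerivAt (fun x => (x ^ s)⁻¹) (-s * (x ^ (s + 1))⁻¹) x := by
  have h := hasDerivAt_zpow (-s : ℤ) x (.inl hx)
  simp only [zpow_neg, zpow_natCast] at h
  rwa [show (-(s : ℤ) - 1) = -((s + 1 : ℕ) : ℤ) by push_cast; ring, zpow_neg, zpow_natCast,
    Int.cast_neg, Int.cast_natCast] at h

lemma hasDerivAt_hurwitzSum (hs : 2 ≤ s) (hx : 0 < x) :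
    HasDerivAt (hurwitzSum s) (-s * hurwitzSum (s + 1) x) x := by
  have hx2 : 0 < x / 2 := by positivity
  have hterm (k : ℕ) {y : ℝ} (hy : 0 < y) : HasDerivAt (fun y : ℝ => ((y + k) ^ s)⁻¹)
      (-s * ((y + k) ^ (s + 1))⁻¹) y :=
    (hasDerivAt_inv_pow s (by positivity)).comp_add_const y k
  have hbound (k : ℕ) (y : ℝ) (hy : y ∈ Ioi (x / 2)) :
      ‖-(s : ℝ) * ((y + k) ^ (s + 1))⁻¹‖ ≤ s * ((x / 2 + k) ^ (s + 1))⁻¹ := by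
    have hy : x / 2 < y := hy
    have : 0 < y + k := by linarith [(k.cast_nonneg : (0 : ℝ) ≤ k)]
    rw [norm_mul, norm_neg, Real.norm_natCast, norm_inv, norm_pow, Real.norm_of_nonneg this.le]
    gcongr
  have h := hasDerivAt_tsum_of_isPreconnected
    ((summable_inv_add_pow (by omega) hx2.le).mul_left (s : ℝ)) isOpen_Ioi isPreconnected_Ioi
    (fun k y (hy : x / 2 < y) => hterm k (hx2.trans hy)) hbound (half_lt_self hx)
    (summable_inv_add_pow hs hx.le) (half_lt_self hx)
  rwa [tsum_mul_left] at h

end HurwitzSum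

section Telescoping

variable {p : ℕ} {a t : ℝ}

lemma convexOn_inv_pow (p : ℕ) : ConvexOn ℝ (Ioi 0) fun x : ℝ => (x ^ p)⁻¹ := by
  simpa only [zpow_neg, zpow_natCast] using convexOn_zpow (𝕜 := ℝ) (-p : ℤ)

lemma mul_inv_pow_succ_le_inv_pow_sub_inv_pow (ha : 0 < a) :
    p * ((a + 1) ^ (p + 1))⁻¹ ≤ (a ^ p)⁻¹ - ((a + 1) ^ p)⁻¹ := by
  have h := (convexOn_inv_pow p).slope_le_of_hasDerivAt ha (show 0 < a + 1 by positivity)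
    (lt_add_one a) (hasDerivAt_inv_pow p (by positivity))
  rw [slope_def_field, add_sub_cancel_left, div_one] at h
  linarith

lemma inv_pow_sub_inv_pow_le_mul_inv_pow_succ (ha : 0 < a) :
    (a ^ p)⁻¹ - ((a + 1) ^ p)⁻¹ ≤ p * (a ^ (p + 1))⁻¹ := by
  have h := (convexOn_inv_pow p).le_slope_of_hasDerivAt ha (show 0 < a + 1 by positivity)
    (lt_add_one a) (hasDerivAt_inv_pow p ha.ne')
  rw [slope_def_field, add_sub_cancel_left, div_one] at h
  linarith

lemma hasSum_sub_succ {f : ℕ → ℝ} (hf : Summable f) :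
    HasSum (fun k => f k - f (k + 1)) (f 0) := by
  have h := hf.hasSum.sub ((summable_nat_add_iff 1).2 hf).hasSum
  rwa [hf.tsum_eq_zero_add, add_sub_cancel_right] at h

lemma hasSum_inv_pow_sub_inv_pow (hp : 2 ≤ p) (ht : 0 ≤ t) :
    HasSum (fun k : ℕ => ((t + k) ^ p)⁻¹ - ((t + k + 1) ^ p)⁻¹) (t ^ p)⁻¹ := by
  simpa [add_assoc] using hasSum_sub_succ (summable_inv_add_pow hp ht)

lemma mul_hurwitzSum_add_one_le_inv_pow (hp : 2 ≤ p) (ht : 0 < t) :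
    p * hurwitzSum (p + 1) (t + 1) ≤ (t ^ p)⁻¹ := by
  rw [hurwitzSum, ← tsum_mul_left]
  refine hasSum_le (fun k => ?_)
    ((summable_inv_add_pow (by omega) (by positivity)).mul_left _).hasSum
    (hasSum_inv_pow_sub_inv_pow hp ht.le)
  rw [add_right_comm]
  exact mul_inv_pow_succ_le_inv_pow_sub_inv_pow (by positivity)

lemma inv_pow_le_mul_hurwitzSum (hp : 2 ≤ p) (ht : 0 < t) :
    (t ^ p)⁻¹ ≤ p * hurwitzSum (p + 1) t := by
  rw [hurwitzSum, ← tsum_mul_left]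
  exact hasSum_le (fun k => inv_pow_sub_inv_pow_le_mul_inv_pow_succ (by positivity))
    (hasSum_inv_pow_sub_inv_pow hp ht.le)
    ((summable_inv_add_pow (by omega) ht.le).mul_left _).hasSum

end Telescoping

section KeyInequality

variable {m : ℕ} {t : ℝ}

lemma pow_succ_sub_pow_succ_le (ht : 0 ≤ t) :
    (t + 1) ^ (m + 1) - t ^ (m + 1) ≤ (m + 1) * (t + 1) ^ m := by
  have h := (convexOn_pow (m + 1)).slope_le_of_hasDerivAt ht (show 0 ≤ t + 1 by positivity)
    (lt_add_one t) (hasDerivAt_pow (m + 1) (t + 1))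
  rw [slope_def_field, add_sub_cancel_left, div_one] at h
  push_cast at h
  simpa using h

lemma inv_pow_div_le_mul_inv_pow_add_mul_inv_pow (hm : 2 ≤ m) (ht : 0 < t) :
    (t ^ m)⁻¹ / m ≤ m * (t ^ (m + 1))⁻¹ + t * ((t + 1) ^ (m + 1))⁻¹ := by
  have hm' : (2 : ℝ) ≤ m := by exact_mod_cast hm
  have hbern : (t + 1) ^ m * (t - m) ≤ t ^ m * t := by
    have h := pow_succ_sub_pow_succ_le (m := m) ht.le
    rw [pow_succ, pow_succ] at h
    linarith
  have hquad : 0 ≤ (m : ℝ) ^ 2 + (m - 1) * t ^ 2 - t := by nlinarith [sq_nonneg (t - 1)]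
  rw [pow_succ, pow_succ, div_le_iff₀ (by positivity)]
  field_simp
  nlinarith [mul_le_mul_of_nonneg_left hbern (by positivity : (0 : ℝ) ≤ m * t),
    mul_nonneg (by positivity : (0 : ℝ) ≤ (t + 1) ^ m) hquad]

lemma hurwitzSum_le_mul_hurwitzSum (hm : 2 ≤ m) (ht : 0 < t) :
    hurwitzSum (m + 1) t ≤ (m + 1) * t * hurwitzSum (m + 2) t := by
  have hm0 : (0 : ℝ) < m := by exact_mod_cast (show 0 < m by omega)
  have hupper : hurwitzSum (m + 1) (t + 1) ≤ (t ^ m)⁻¹ / m := by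
    rw [le_div_iff₀ hm0, mul_comm]
    exact mul_hurwitzSum_add_one_le_inv_pow hm ht
  have hlower := inv_pow_le_mul_hurwitzSum (p := m + 1) (by omega) (by positivity : 0 < t + 1)
  have ht_pow : t * (t ^ (m + 2))⁻¹ = (t ^ (m + 1))⁻¹ := by
    rw [pow_succ _ (m + 1)]
    field_simp
  calc hurwitzSum (m + 1) t = (t ^ (m + 1))⁻¹ + hurwitzSum (m + 1) (t + 1) :=
        hurwitzSum_eq_inv_pow_add (by omega) ht.le
    _ ≤ (t ^ (m + 1))⁻¹ + (t ^ m)⁻¹ / m := by gcongr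
    _ ≤ (m + 1) * (t ^ (m + 1))⁻¹ + t * ((t + 1) ^ (m + 1))⁻¹ := by
        linarith [inv_pow_div_le_mul_inv_pow_add_mul_inv_pow hm ht]
    _ ≤ (m + 1) * t * ((t ^ (m + 2))⁻¹ + hurwitzSum (m + 2) (t + 1)) := by
        push_cast at hlower
        rw [← ht_pow]
        nlinarith
    _ = (m + 1) * t * hurwitzSum (m + 2) t := by
        rw [← hurwitzSum_eq_inv_pow_add (by omega) ht.le]

end KeyInequality

section Convexity

variable {s m : ℕ}

lemma hasDerivAt_hurwitzSum_exp (hs : 2 ≤ s) (x : ℝ) :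
    HasDerivAt (fun x => hurwitzSum s (exp x)) (-s * (exp x * hurwitzSum (s + 1) (exp x))) x :=
  ((hasDerivAt_hurwitzSum hs (exp_pos x)).comp x (hasDerivAt_exp x)).congr_deriv (by ring)

lemma antitone_exp_mul_hurwitzSum_exp (hm : 2 ≤ m) :
    Antitone fun x => exp x * hurwitzSum (m + 1) (exp x) := by
  have hderiv (x : ℝ) :=
    (hasDerivAt_exp x).fun_mul (hasDerivAt_hurwitzSum_exp (s := m + 1) (by omega) x)
  refine antitone_of_deriv_nonpos (fun x => (hderiv x).differentiableAt) fun x => ?_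
  rw [(hderiv x).deriv]
  have hkey := hurwitzSum_le_mul_hurwitzSum hm (exp_pos x)
  push_cast
  nlinarith [exp_pos x]

lemma convexOn_hurwitzSum_exp (hm : 2 ≤ m) : ConvexOn ℝ univ fun x => hurwitzSum m (exp x) := by
  have hderiv := hasDerivAt_hurwitzSum_exp (s := m) (by omega)
  refine Monotone.convexOn_univ_of_deriv (fun x => (hderiv x).differentiableAt) ?_
  rw [funext fun x => (hderiv x).deriv]
  exact (antitone_exp_mul_hurwitzSum_exp (by omega)).const_mul_of_nonpos (by simp)

end Convexity

section Digamma

noncomputable def digammaTerm (m : ℕ) (y : ℝ) : ℝ := (1 + (m : ℝ))⁻¹ - (y + 1 + m)⁻¹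

noncomputable def digammaSeries (y : ℝ) : ℝ :=
  -eulerMascheroniConstant - y⁻¹ + ∑' m : ℕ, digammaTerm m y

variable {x y : ℝ}

lemma digammaTerm_mem_Icc {m : ℕ} (hy : 0 ≤ y) :
    digammaTerm m y ∈ Icc 0 (y * ((1 + (m : ℝ)) ^ 2)⁻¹) := by
  have e : digammaTerm m y = y / ((1 + m) * (y + 1 + m)) := by
    rw [digammaTerm]
    field_simp
    ring
  rw [e]
  constructor
  · positivity
  · rw [div_eq_mul_inv, sq]
    gcongr
    linarith

lemma summable_digammaTerm (hy : 0 ≤ y) : Summable fun m : ℕ => digammaTerm m y :=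
  ((summable_inv_add_pow le_rfl zero_le_one).mul_left y).of_nonneg_of_le
    (fun _ => (digammaTerm_mem_Icc hy).1) (fun _ => (digammaTerm_mem_Icc hy).2)

lemma hasDerivAt_digammaTerm (m : ℕ) (hy : 0 ≤ y) :
    HasDerivAt (digammaTerm m) (((y + 1 + m) ^ 2)⁻¹) y := by
  have h : HasDerivAt (fun y => y + 1 + (m : ℝ)) 1 y := ((hasDerivAt_id y).add_const 1).add_const _
  exact ((h.inv (by positivity)).const_sub (1 + (m : ℝ))⁻¹).congr_deriv (by ring)

lemma hasDerivAt_digammaSeries (hx : 0 < x) : HasDerivAt digammaSeries (hurwitzSum 2 x) x := by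
  have hbound (m : ℕ) (y : ℝ) (hy : y ∈ Ioi 0) :
      ‖((y + 1 + m) ^ 2)⁻¹‖ ≤ ((1 + (m : ℝ)) ^ 2)⁻¹ := by
    have hy : 0 < y := hy
    rw [norm_inv, norm_pow, Real.norm_of_nonneg (by positivity)]
    gcongr
    linarith
  have htsum := hasDerivAt_tsum_of_isPreconnected (summable_inv_add_pow le_rfl zero_le_one)
    isOpen_Ioi isPreconnected_Ioi (fun m y (hy : 0 < y) => hasDerivAt_digammaTerm m hy.le)
    hbound hx (summable_digammaTerm hx.le) hx
  rw [hurwitzSum_eq_inv_pow_add le_rfl hx.le, hurwitzSum]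
  exact (((hasDerivAt_inv hx.ne').const_sub _).fun_add htsum).congr_deriv (by rw [neg_neg])

lemma hasDerivAt_logGammaSeq (n : ℕ) (hy : 0 < y) :
    HasDerivAt (fun y => BohrMollerup.logGammaSeq y n)
      (log n - harmonic n - y⁻¹ + ∑ m ∈ Finset.range n, digammaTerm m y) y := by
  have hlog : HasDerivAt (fun y => ∑ m ∈ Finset.range (n + 1), log (y + m))
      (∑ m ∈ Finset.range (n + 1), (y + m)⁻¹) y :=
    HasDerivAt.fun_sum fun m _ => ((hasDerivAt_id y).add_const (m : ℝ)).log (by positivity)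
      |>.congr_deriv (one_div _)
  refine ((((hasDerivAt_id y).mul_const (log n)).add_const _).fun_sub hlog).congr_deriv ?_
  rw [Finset.sum_range_succ', harmonic]
  simp only [digammaTerm, Finset.sum_sub_distrib]
  push_cast
  ring_nf

lemma tendstoUniformlyOn_deriv_logGammaSeq (b : ℝ) :
    TendstoUniformlyOn
      (fun (n : ℕ) y => log n - harmonic n - y⁻¹ + ∑ m ∈ Finset.range n, digammaTerm m y)
      digammaSeries atTop (Ioo 0 b) := by
  have hconst :
      Tendsto (fun n : ℕ => log n - harmonic n) atTop (𝓝 (-eulerMascheroniConstant)) := by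
    simpa using tendsto_harmonic_sub_log.neg
  have hinv : TendstoUniformlyOn (fun (_ : ℕ) (y : ℝ) => y⁻¹) (fun y => y⁻¹) atTop (Ioo 0 b) :=
    fun _ hu => .of_forall fun _ _ _ => refl_mem_uniformity hu
  have hbound (m : ℕ) (y : ℝ) (hy : y ∈ Ioo 0 b) :
      ‖digammaTerm m y‖ ≤ b * ((1 + (m : ℝ)) ^ 2)⁻¹ := by
    obtain ⟨h0, h1⟩ := digammaTerm_mem_Icc (m := m) hy.1.le
    rw [Real.norm_of_nonneg h0]
    exact h1.trans (by gcongr; exact hy.2.le)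
  exact ((hconst.tendstoUniformlyOn_const _).sub hinv).add
    (tendstoUniformlyOn_tsum_nat ((summable_inv_add_pow le_rfl zero_le_one).mul_left b) hbound)

lemma digamma_eq_digammaSeries (hx : 0 < x) : digamma x = digammaSeries x :=
  (hasDerivAt_of_tendstoUniformlyOn isOpen_Ioo (tendstoUniformlyOn_deriv_logGammaSeq (x + 1))
    (.of_forall fun n _ hy => hasDerivAt_logGammaSeq n hy.1)
    (fun _ hy => BohrMollerup.tendsto_log_gamma hy.1) ⟨hx, lt_add_one x⟩).deriv

lemma polygamma_succ (j : ℕ) (hx : 0 < x) :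
    polygamma (j + 1) x = (-1) ^ j * (j + 1).factorial * hurwitzSum (j + 2) x := by
  induction j generalizing x with
  | zero =>
    have hev : digamma =ᶠ[𝓝 x] digammaSeries :=
      eventually_of_mem (Ioi_mem_nhds hx) fun y hy => digamma_eq_digammaSeries hy
    simp [polygamma, hev.deriv_eq, (hasDerivAt_digammaSeries hx).deriv]
  | succ j ih =>
    have hev : polygamma (j + 1) =ᶠ[𝓝 x]
        fun y => (-1) ^ j * (j + 1).factorial * hurwitzSum (j + 2) y :=
      eventually_of_mem (Ioi_mem_nhds hx) fun y hy => ih hy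
    rw [polygamma, iteratedDeriv_succ, ← polygamma, hev.deriv_eq,
      ((hasDerivAt_hurwitzSum (by omega) hx).const_mul _).deriv, Nat.factorial_succ (j + 1)]
    push_cast
    ring

end Digamma

theorem stmt6 (n : ℕ) (hn : 0 < n) :
    ConvexOn ℝ Set.univ (fun x : ℝ => polygamma (2 * n - 1) (Real.exp x)) := by
  obtain ⟨j, rfl⟩ : ∃ j, n = j + 1 := ⟨n - 1, by omega⟩
  have hodd : 2 * (j + 1) - 1 = 2 * j + 1 := by omega
  have hpoly : (fun x => polygamma (2 * (j + 1) - 1) (exp x))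
      = fun x => (2 * j + 1).factorial * hurwitzSum (2 * j + 2) (exp x) := by
    funext x
    rw [hodd, polygamma_succ _ (exp_pos x), (even_two_mul j).neg_one_pow, one_mul]
  rw [hpoly]
  exact (convexOn_hurwitzSum_exp (by omega)).smul (by positivity)
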